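/- For every natural number n, N_n ≠ 0; equivalently, every Fibonacci symbol element of the symbol algebra (1,1 / ℚ(ω), ω) of degree 3 is invertible, since an element of this algebra is invertible exactly when its reduced norm is nonzero. -/

import Mathlib

/-!
Eliminating `ω ^ 2 = -ω - 1`, the reduced norm is a polynomial in `ω` of degree one, and
rewriting every term through `f (k + 2) = f (k + 1) + f k` in terms of `a = f n`, `b = f (n + 1)`
the coefficient of `ω` cancels. What remains is the binary cubic
`1264 a³ + 6072 a² b + 9768 a b² + 5256 b³` with positive coefficients, which is nonzero
because `b = fib (n + 1) > 0`.
-/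

/-- Fibonacci numbers as complex numbers. -/
noncomputable def f (n : ℕ) : ℂ := (Nat.fib n : ℂ)

/-- The reduced norm of the `n`-th Fibonacci symbol element of the symbol algebra
`(1,1 / ℚ(ω), ω)`, where `c00 = f n, c10 = f (n+1), c20 = f (n+2), c01 = f (n+3),
c11 = f (n+4), c21 = f (n+5), c02 = f (n+6), c12 = f (n+7), c22 = f (n+8)`. -/
noncomputable def fibSymbolNorm (ω : ℂ) (n : ℕ) : ℂ :=
  (f (n + 2) ^ 3 + f (n + 5) ^ 3 + f (n + 8) ^ 3 - 3 * f (n + 2) * f (n + 5) * f (n + 8)) +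
    (f (n + 1) ^ 3 + f (n + 4) ^ 3 + f (n + 7) ^ 3 - 3 * f (n + 1) * f (n + 4) * f (n + 7)) -
    3 * (f n * f (n + 1) * f (n + 2) + f (n + 3) * f (n + 4) * f (n + 5) +
      f (n + 6) * f (n + 7) * f (n + 8)) -
    3 * ω * (f n * f (n + 7) * f (n + 5) + f (n + 3) * f (n + 1) * f (n + 8) +
      f (n + 6) * f (n + 4) * f (n + 2)) -
    3 * ω ^ 2 * (f n * f (n + 4) * f (n + 8) + f (n + 6) * f (n + 1) * f (n + 5) +
      f (n + 3) * f (n + 7) * f (n + 2)) +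
    (f n ^ 3 + f (n + 3) ^ 3 + f (n + 6) ^ 3 - 3 * f n * f (n + 3) * f (n + 6))

theorem sq_add_self_add_one_eq_zero {R : Type*} [CommRing R] [IsDomain R] {ω : R}
    (hω : ω ≠ 1) (hω3 : ω ^ 3 = 1) : ω ^ 2 + ω + 1 = 0 := by
  have h : (ω - 1) * (ω ^ 2 + ω + 1) = 0 := by linear_combination hω3
  exact (mul_eq_zero.mp h).resolve_left (sub_ne_zero.mpr hω)

theorem f_add_two (n : ℕ) : f (n + 2) = f (n + 1) + f n := by
  simp only [f, Nat.fib_add_two, Nat.cast_add, add_comm]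

theorem fibSymbolNorm_eq {ω : ℂ} (hω : ω ^ 2 + ω + 1 = 0) (n : ℕ) :
    fibSymbolNorm ω n =
      ((1264 * Nat.fib n ^ 3 + 6072 * Nat.fib n ^ 2 * Nat.fib (n + 1) +
        9768 * Nat.fib n * Nat.fib (n + 1) ^ 2 + 5256 * Nat.fib (n + 1) ^ 3 : ℕ) : ℂ) := by
  rw [fibSymbolNorm, f_add_two (n + 6), f_add_two (n + 5), f_add_two (n + 4), f_add_two (n + 3),
    f_add_two (n + 2), f_add_two (n + 1), f_add_two n]
  simp only [f]
  push_cast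
  set a : ℂ := ((Nat.fib n : ℕ) : ℂ)
  set b : ℂ := ((Nat.fib (n + 1) : ℕ) : ℂ)
  linear_combination (-102 * a ^ 3 - 399 * a ^ 2 * b - 501 * a * b ^ 2 - 198 * b ^ 3) * hω

theorem stmt19 (ω : ℂ) (hω : ω ≠ 1) (hω3 : ω ^ 3 = 1) (n : ℕ) :
    fibSymbolNorm ω n ≠ 0 := by
  rw [fibSymbolNorm_eq (sq_add_self_add_one_eq_zero hω hω3), Nat.cast_ne_zero]
  have := Nat.fib_pos.mpr n.succ_pos
  positivity
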